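/- For every integer b ≥ 2 and every integer k ≥ 1, writing c_k = (2k−1)(b−1) + b, one has the two-sided bound c_k/(2(b−1)·b^k) ≤ b^k/(b−1) − √(f_b(2k−1)) ≤ c_k/((b−1)·b^k); in particular 0 < b^k/(b−1) − √(f_b(2k−1)). -/

import Mathlib

/-- The recurrence `f_b(0) = 0`, `f_b(n) = b·f_b(n-1) + n`. -/
def f (b : ℕ) : ℕ → ℕ
  | 0 => 0
  | n + 1 => b * f b n + (n + 1)

lemma f_closed (b n : ℕ) :
    ((b:ℝ) - 1)^2 * (f b n : ℝ) = (b:ℝ)^(n+1) - ((n:ℝ)+1)*(b:ℝ) + (n:ℝ) := by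
  induction n with
  | zero => simp [f]
  | succ n ih =>
    simp only [f]
    push_cast
    linear_combination (b:ℝ) * ih

theorem stmt_8 (b k : ℕ) (hb : 2 ≤ b) (hk : 1 ≤ k) :
    (((2 * (k : ℝ) - 1) * ((b : ℝ) - 1) + b) / (2 * ((b : ℝ) - 1) * (b : ℝ) ^ k)
        ≤ (b : ℝ) ^ k / ((b : ℝ) - 1) - Real.sqrt (f b (2 * k - 1)) ∧
      (b : ℝ) ^ k / ((b : ℝ) - 1) - Real.sqrt (f b (2 * k - 1))
        ≤ ((2 * (k : ℝ) - 1) * ((b : ℝ) - 1) + b) / (((b : ℝ) - 1) * (b : ℝ) ^ k)) ∧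
      0 < (b : ℝ) ^ k / ((b : ℝ) - 1) - Real.sqrt (f b (2 * k - 1)) := by
  have hB : (2:ℝ) ≤ (b:ℝ) := by exact_mod_cast hb
  have hk' : (1:ℝ) ≤ (k:ℝ) := by exact_mod_cast hk
  set B := (b:ℝ) with hBdef
  set p := B ^ k with hpdef
  have hd1 : (0:ℝ) < B - 1 := by linarith
  have hp0 : (0:ℝ) < p := by positivity
  set c := (2*(k:ℝ)-1)*(B-1)+B with hcdef
  have hc0 : (0:ℝ) < c := by nlinarith
  set F := ((f b (2*k-1) : ℕ) : ℝ) with hFdef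
  have hF0 : (0:ℝ) ≤ F := Nat.cast_nonneg _
  have hF : (B-1)^2 * F = p^2 - c := by
    have h := f_closed b (2*k-1)
    have h1 : 2*k - 1 + 1 = 2*k := by omega
    rw [h1] at h
    have h2 : ((2*k-1 : ℕ):ℝ) = 2*(k:ℝ)-1 := by
      rw [Nat.cast_sub (by omega : 1 ≤ 2*k)]; push_cast; ring
    rw [h2] at h
    have h3 : B^(2*k) = p^2 := by rw [hpdef, ← pow_mul, mul_comm]
    rw [h3] at h
    rw [h, hcdef]; ring
  have hcle : c ≤ p^2 := by nlinarith [mul_nonneg (sq_nonneg (B-1)) hF0]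
  have key1 : Real.sqrt F ≤ p/(B-1) - c/(2*(B-1)*p) := by
    have hU0 : 0 ≤ p/(B-1) - c/(2*(B-1)*p) := by
      rw [sub_nonneg, div_le_div_iff₀ (by positivity) hd1]
      nlinarith
    have hFU : F ≤ (p/(B-1) - c/(2*(B-1)*p))^2 := by
      have expand : (p/(B-1) - c/(2*(B-1)*p))^2 * ((B-1)^2 * (2*p)^2)
          = (2*p^2 - c)^2 := by
        field_simp
      nlinarith [sq_nonneg c, sq_nonneg (B-1), sq_nonneg (2*p),
        mul_pos (mul_pos hd1 hd1) (mul_pos hp0 hp0)]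
    calc Real.sqrt F ≤ Real.sqrt ((p/(B-1) - c/(2*(B-1)*p))^2) :=
          Real.sqrt_le_sqrt hFU
      _ = p/(B-1) - c/(2*(B-1)*p) := Real.sqrt_sq hU0
  have key2 : p/(B-1) - c/((B-1)*p) ≤ Real.sqrt F := by
    rcases le_or_gt (p/(B-1) - c/((B-1)*p)) 0 with hL | hL
    · exact hL.trans (Real.sqrt_nonneg _)
    · have hLF : (p/(B-1) - c/((B-1)*p))^2 ≤ F := by
        have expand : (p/(B-1) - c/((B-1)*p))^2 * ((B-1)^2 * p^2)
            = (p^2 - c)^2 := by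
          field_simp
        nlinarith [mul_nonneg hc0.le (sub_nonneg.mpr hcle),
          mul_pos (mul_pos hd1 hd1) (mul_pos hp0 hp0)]
      calc p/(B-1) - c/((B-1)*p)
          = Real.sqrt ((p/(B-1) - c/((B-1)*p))^2) := (Real.sqrt_sq hL.le).symm
        _ ≤ Real.sqrt F := Real.sqrt_le_sqrt hLF
  have hcpos : 0 < c/(2*(B-1)*p) := by positivity
  refine ⟨⟨by linarith, by linarith⟩, by linarith⟩
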